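/- Let P₁ be self-adjoint invertible, P₀ skew-adjoint in K^{n×n}, H(ζ) self-adjoint with mI ≤ H(ζ) ≤ MI, and let A ε = P₁ d/dζ(H ε) + P₀ H ε on its domain with boundary conditions encoded by a full-rank matrix W_B ∈ K^{n×2n}. Then for ε in D(A), Re ⟨A ε, ε⟩_X = ½ [(H ε)(b)* P₁ (H ε)(b) − (H ε)(a)* P₁ (H ε)(a)] · ½. -/

import Mathlib

open MeasureTheory intervalIntegral Matrix

/-- Power balance for port-Hamiltonian operators: for `P₁` self-adjoint invertible,
`P₀` skew-adjoint, `H(ζ)` self-adjoint with `mI ≤ H(ζ) ≤ MI`, boundary conditions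
encoded by a full-rank `W_B`, and `A ε = P₁ (H ε)' + P₀ H ε`, one has, for `ε ∈ D(A)`,
`⟨A ε, ε⟩_X = ¼ [(Hε)(b)ᵀ P₁ (Hε)(b) − (Hε)(a)ᵀ P₁ (Hε)(a)]`. -/
theorem port_hamiltonian_power_balance
    {n : ℕ} (a b m M : ℝ) (hab : a ≤ b) (hm : 0 < m) (hmM : m ≤ M)
    (P1 P0 : Matrix (Fin n) (Fin n) ℝ)
    (hP1 : P1ᵀ = P1) (hP1inv : IsUnit P1.det) (hP0 : P0ᵀ = -P0)
    (H : ℝ → Matrix (Fin n) (Fin n) ℝ)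
    (hHsym : ∀ ζ ∈ Set.Icc a b, (H ζ)ᵀ = H ζ)
    (hHc : ContinuousOn H (Set.Icc a b))
    (hlow : ∀ ζ ∈ Set.Icc a b, ∀ v : Fin n → ℝ,
      m * (v ⬝ᵥ v) ≤ v ⬝ᵥ (H ζ).mulVec v)
    (hupp : ∀ ζ ∈ Set.Icc a b, ∀ v : Fin n → ℝ,
      v ⬝ᵥ (H ζ).mulVec v ≤ M * (v ⬝ᵥ v))
    (WB : Matrix (Fin n) (Fin n ⊕ Fin n) ℝ) (hWB : WB.rank = n)
    (ε g g' : ℝ → Fin n → ℝ)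
    (hg : ∀ ζ ∈ Set.Icc a b, g ζ = (H ζ).mulVec (ε ζ))
    (hεc : ContinuousOn ε (Set.Icc a b)) (hg'c : ContinuousOn g' (Set.Icc a b))
    (hderiv : ∀ ζ ∈ Set.Icc a b, HasDerivAt g (g' ζ) ζ)
    -- ε lies in the domain of A: the homogeneous boundary conditions hold
    (hbc : WB.mulVec (Sum.elim
        ((1 / Real.sqrt 2) • (P1.mulVec (g b) - P1.mulVec (g a)))
        ((1 / Real.sqrt 2) • (g b + g a))) = 0) :
    (1 / 2) * (∫ ζ in a..b,
        ε ζ ⬝ᵥ (H ζ).mulVec (P1.mulVec (g' ζ) + P0.mulVec (g ζ)))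
      = (1 / 4) * (g b ⬝ᵥ P1.mulVec (g b) - g a ⬝ᵥ P1.mulVec (g a)) := by
  have huIcc : Set.uIcc a b = Set.Icc a b := Set.uIcc_of_le hab
  -- symmetry trick: v ⬝ᵥ P1.mulVec w = w ⬝ᵥ P1.mulVec v
  have hsymdot : ∀ v w : Fin n → ℝ, v ⬝ᵥ P1.mulVec w = w ⬝ᵥ P1.mulVec v := by
    intro v w
    rw [dotProduct_mulVec, ← mulVec_transpose, hP1, dotProduct_comm]
  -- skew part vanishes
  have hskew : ∀ v : Fin n → ℝ, v ⬝ᵥ P0.mulVec v = 0 := by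
    intro v
    have h : v ⬝ᵥ P0.mulVec v = -(v ⬝ᵥ P0.mulVec v) := by
      conv_lhs => rw [dotProduct_mulVec, ← mulVec_transpose, hP0, dotProduct_comm]
      simp [mulVec, dotProduct, Finset.sum_neg_distrib]
    linarith
  -- rewrite the integrand on Icc
  have hintegrand : ∀ ζ ∈ Set.Icc a b,
      ε ζ ⬝ᵥ (H ζ).mulVec (P1.mulVec (g' ζ) + P0.mulVec (g ζ))
        = g ζ ⬝ᵥ P1.mulVec (g' ζ) := by
    intro ζ hζ
    have h1 : ε ζ ⬝ᵥ (H ζ).mulVec (P1.mulVec (g' ζ) + P0.mulVec (g ζ))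
        = g ζ ⬝ᵥ (P1.mulVec (g' ζ) + P0.mulVec (g ζ)) := by
      rw [dotProduct_mulVec, ← mulVec_transpose, hHsym ζ hζ, ← hg ζ hζ]
    rw [h1, dotProduct_add, hskew (g ζ), add_zero]
  -- derivative of the quadratic form
  have hφ : ∀ ζ ∈ Set.Icc a b,
      HasDerivAt (fun t => g t ⬝ᵥ P1.mulVec (g t))
        (2 * (g ζ ⬝ᵥ P1.mulVec (g' ζ))) ζ := by
    intro ζ hζ
    have hcomp : ∀ i, HasDerivAt (fun t => g t i) (g' ζ i) ζ :=
      hasDerivAt_pi.mp (hderiv ζ hζ)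
    have key : HasDerivAt (fun t => g t ⬝ᵥ P1.mulVec (g t))
        (g' ζ ⬝ᵥ P1.mulVec (g ζ) + g ζ ⬝ᵥ P1.mulVec (g' ζ)) ζ := by
      have h1 : ∀ i, HasDerivAt (fun t => (P1.mulVec (g t)) i)
          ((P1.mulVec (g' ζ)) i) ζ := by
        intro i
        simpa [mulVec, dotProduct] using
          HasDerivAt.fun_sum (fun j _ => (hcomp j).const_mul (P1 i j))
      have h2 : HasDerivAt (fun t => ∑ i, g t i * (P1.mulVec (g t)) i)
          (∑ i, (g' ζ i * (P1.mulVec (g ζ)) i + g ζ i * (P1.mulVec (g' ζ)) i)) ζ :=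
        HasDerivAt.fun_sum (fun i _ => (hcomp i).mul (h1 i))
      simpa [dotProduct, Finset.sum_add_distrib] using h2
    rw [hsymdot (g' ζ) (g ζ)] at key
    convert key using 1
    ring
  -- continuity of the integrand
  have hgc : ContinuousOn g (Set.Icc a b) := fun ζ hζ =>
    (hderiv ζ hζ).continuousAt.continuousWithinAt
  have hic : ContinuousOn (fun ζ => g ζ ⬝ᵥ P1.mulVec (g' ζ)) (Set.Icc a b) := by
    simp only [dotProduct, mulVec]
    exact continuousOn_finset_sum _ fun i _ =>
      ((continuous_apply i).comp_continuousOn hgc).mul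
        (continuousOn_finset_sum _ fun j _ =>
          continuousOn_const.mul ((continuous_apply j).comp_continuousOn hg'c))
  -- compute the integral via FTC
  have hFTC : (∫ ζ in a..b, 2 * (g ζ ⬝ᵥ P1.mulVec (g' ζ)))
      = g b ⬝ᵥ P1.mulVec (g b) - g a ⬝ᵥ P1.mulVec (g a) := by
    apply intervalIntegral.integral_eq_sub_of_hasDerivAt
    · intro ζ hζ; exact hφ ζ (huIcc ▸ hζ)
    · exact ((continuousOn_const.mul hic).mono (le_of_eq huIcc)).intervalIntegrable
  have hcong : (∫ ζ in a..b,
        ε ζ ⬝ᵥ (H ζ).mulVec (P1.mulVec (g' ζ) + P0.mulVec (g ζ)))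
      = ∫ ζ in a..b, g ζ ⬝ᵥ P1.mulVec (g' ζ) :=
    intervalIntegral.integral_congr (fun ζ hζ => hintegrand ζ (huIcc ▸ hζ))
  rw [hcong]
  rw [intervalIntegral.integral_const_mul] at hFTC
  linarith
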